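/- In the three-node unidirectional network model ($y_{12}^t = x_1^t$, $y_{23}^t = p\,x_1^t + x_2^t$, $p \in [0,1]$, $x_i^t \geq 0$), with $y_{12}^t > 0$ for all $t$, the solution is unique if and only if $y_{23}^{t_0} = 0$ for some $t_0$; in that case the unique solution is $p = 0$, $x_1^t = y_{12}^t$, and $x_2^t = y_{23}^t$ for all $t$. -/
import Mathlib

lemma stmt7_unique (nT : ℕ) (y12 y23 : Fin nT → ℝ)
    (h12 : ∀ t, 0 < y12 t) (t0 : Fin nT) (h0 : y23 t0 = 0)
    (p : ℝ) (x1 x2 : Fin nT → ℝ)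
    (hp : 0 ≤ p ∧ p ≤ 1) (hx1 : ∀ t, 0 ≤ x1 t) (hx2 : ∀ t, 0 ≤ x2 t)
    (e1 : ∀ t, y12 t = x1 t) (e2 : ∀ t, y23 t = p * x1 t + x2 t) :
    p = 0 ∧ x1 = y12 ∧ x2 = y23 := by
  have hx1' : x1 = y12 := funext fun t => (e1 t).symm
  have hpt0 : p * x1 t0 + x2 t0 = 0 := by rw [← e2 t0, h0]
  have hx1pos : 0 < x1 t0 := by rw [← e1 t0]; exact h12 t0
  have hp0 : p = 0 := by
    by_contra h
    have hppos : 0 < p := lt_of_le_of_ne hp.1 (Ne.symm h)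
    have : 0 < p * x1 t0 + x2 t0 :=
      add_pos_of_pos_of_nonneg (mul_pos hppos hx1pos) (hx2 t0)
    linarith
  refine ⟨hp0, hx1', funext fun t => ?_⟩
  have := e2 t
  rw [hp0] at this
  linarith
/-- in the three-node unidirectional single-step model, the
solution is unique iff `y23 t0 = 0` for some `t0`, and then the unique solution
is `p = 0`, `x1 = y12`, `x2 = y23`. -/
theorem stmt7 (nT : ℕ) (hne : (Finset.univ : Finset (Fin nT)).Nonempty)
    (y12 y23 : Fin nT → ℝ)
    (h12 : ∀ t, 0 < y12 t) (h23 : ∀ t, 0 ≤ y23 t)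
    (hmin : Finset.univ.inf' hne (fun t => y23 t / y12 t) ≤ 1) :
    ((∃! sol : ℝ × (Fin nT → ℝ) × (Fin nT → ℝ),
        (0 ≤ sol.1 ∧ sol.1 ≤ 1) ∧
        (∀ t, 0 ≤ sol.2.1 t) ∧ (∀ t, 0 ≤ sol.2.2 t) ∧
        (∀ t, y12 t = sol.2.1 t) ∧
        (∀ t, y23 t = sol.1 * sol.2.1 t + sol.2.2 t)) ↔
      ∃ t0, y23 t0 = 0) ∧
    ((∃ t0, y23 t0 = 0) →
      ∀ (p : ℝ) (x1 x2 : Fin nT → ℝ),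
        (0 ≤ p ∧ p ≤ 1) → (∀ t, 0 ≤ x1 t) → (∀ t, 0 ≤ x2 t) →
        (∀ t, y12 t = x1 t) → (∀ t, y23 t = p * x1 t + x2 t) →
        p = 0 ∧ x1 = y12 ∧ x2 = y23) := by
  constructor
  · constructor
    · -- unique → ∃ t0, y23 t0 = 0
      intro huniq
      by_contra hno
      push_neg at hno
      have hpos : ∀ t, 0 < y23 t := fun t => lt_of_le_of_ne (h23 t) (Ne.symm (hno t))
      set m := Finset.univ.inf' hne (fun t => y23 t / y12 t) with hm
      have hmle : ∀ t, m ≤ y23 t / y12 t := fun t =>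
        Finset.inf'_le _ (Finset.mem_univ t)
      obtain ⟨ta, -, hta⟩ := Finset.exists_mem_eq_inf' hne (fun t => y23 t / y12 t)
      have hmpos : 0 < m := by rw [hm, hta]; exact div_pos (hpos ta) (h12 ta)
      have hsolm : (fun t => y23 t - m * y12 t) = fun t => y23 t - m * y12 t := rfl
      have prop : ∀ q : ℝ, 0 ≤ q → q ≤ m →
          ((0 ≤ q ∧ q ≤ 1) ∧
            (∀ t, 0 ≤ y12 t) ∧ (∀ t, 0 ≤ y23 t - q * y12 t) ∧
            (∀ t, y12 t = y12 t) ∧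
            (∀ t, y23 t = q * y12 t + (y23 t - q * y12 t))) := by
        intro q hq0 hqm
        refine ⟨⟨hq0, le_trans hqm hmin⟩, fun t => (h12 t).le, fun t => ?_, fun t => rfl,
          fun t => by ring⟩
        have : q * y12 t ≤ y23 t := by
          have := le_trans hqm (hmle t)
          exact (le_div_iff₀ (h12 t)).mp this
        linarith
      obtain ⟨sol, -, hun⟩ := huniq
      have e0 := hun (0, y12, fun t => y23 t - 0 * y12 t) (prop 0 le_rfl hmpos.le)
      have em := hun (m, y12, fun t => y23 t - m * y12 t) (prop m hmpos.le le_rfl)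
      have : (0 : ℝ) = m := by
        have := e0.trans em.symm
        exact congrArg Prod.fst this
      linarith
    · rintro ⟨t0, h0⟩
      refine ⟨(0, y12, y23), ⟨⟨le_rfl, zero_le_one⟩, fun t => (h12 t).le, h23,
        fun t => rfl, fun t => by ring⟩, ?_⟩
      rintro ⟨p, x1, x2⟩ ⟨hp, hx1, hx2, e1, e2⟩
      obtain ⟨hp0, hx1', hx2'⟩ := stmt7_unique nT y12 y23 h12 t0 h0 p x1 x2 hp hx1 hx2 e1 e2
      simp [hp0, hx1', hx2']
  · rintro ⟨t0, h0⟩ p x1 x2 hp hx1 hx2 e1 e2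
    exact stmt7_unique nT y12 y23 h12 t0 h0 p x1 x2 hp hx1 hx2 e1 e2
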